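/- arXiv:2311.04762 — 8 statements merged into one kernel-verified Lean document; each statement's English description precedes it below -/
import Mathlib

section
/- Let Λ = (λ_n)_{n≥1} be a strictly increasing sequence of positive reals tending to infinity, with counting function F_Λ(t) = #{k : λ_k ≤ t}. Then the set of limit points of the sequence (k/λ_k)_{k≥1} coincides with the set of limit points of the sequence (F_Λ(n)/n)_{n≥1}. -/
open Filter Topology

/-!
Both sequences sample `φ t = F t / t`: `(k + 1) / λ_k = φ λ_k` and `F n / n = φ n`. Comparing
`φ` at `λ_k` with `φ` at `⌊λ_k⌋` and `⌈λ_k⌉`, and `φ n` with `(k + 1) / λ_k` for `k = F n - 1`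
and `k = F n`, shows that the two sequences have the same lower and the same upper limit.
Moreover `(k + 1) / λ_k` increases by at most `1 / λ_k` per step and `F n / n` decreases at most
by the factor `n / (n + 1)`, so far out neither sequence can pass across a fixed interval without
landing in it: the limit points of each are exactly the points between its lower and upper limit.
-/

/-- `LiminfLE u x` says `liminf u ≤ x` in `EReal`, and `LiminfLE (-u) (-x)` says `x ≤ limsup u`. -/
def LiminfLE (u : ℕ → ℝ) (x : ℝ) : Prop := ∀ y > x, ∃ᶠ n in atTop, u n < y

def NoUpwardJumps (u : ℕ → ℝ) : Prop :=
  ∀ c d, c < d → ∀ᶠ n in atTop, u n ≤ c → u (n + 1) < d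

section ClusterPoints

variable {u v : ℕ → ℝ} {x : ℝ}

lemma MapClusterPt.liminfLE (h : MapClusterPt x atTop u) : LiminfLE u x :=
  fun _ hy => h.frequently (eventually_lt_nhds hy)

lemma mapClusterPt_neg_iff : MapClusterPt (-x) atTop (-u) ↔ MapClusterPt x atTop u := by
  refine ⟨fun h => ?_, fun h => h.continuousAt_comp continuous_neg.continuousAt⟩
  simpa [Function.comp_def] using h.continuousAt_comp continuous_neg.continuousAt

lemma mapClusterPt_iff_liminfLE_of_noUpwardJumps (hu : NoUpwardJumps u) :
    MapClusterPt x atTop u ↔ LiminfLE u x ∧ LiminfLE (-u) (-x) := by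
  refine ⟨fun h => ⟨h.liminfLE, (mapClusterPt_neg_iff.2 h).liminfLE⟩, fun ⟨hlow, hup⟩ => ?_⟩
  rw [Metric.nhds_basis_ball.mapClusterPt_iff_frequently]
  intro ε hε
  by_contra hfar
  simp only [not_frequently, Real.ball_eq_Ioo, Set.mem_Ioo, not_and_or, not_lt] at hfar
  obtain ⟨N, hN⟩ := eventually_atTop.1 (hfar.and (hu (x - ε) (x + ε) (by linarith)))
  obtain ⟨p, hpN, hp⟩ := frequently_atTop.1 (hlow (x + ε) (by linarith)) N
  -- below `x - ε` the sequence can neither jump over the ball nor land in it, so it stays below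
  have hstay : ∀ n, p ≤ n → u n ≤ x - ε := by
    intro n hpn
    induction n, hpn using Nat.le_induction with
    | base => exact (hN p hpN).1.resolve_right hp.not_ge
    | succ n hpn ih =>
      exact (hN (n + 1) (by omega)).1.resolve_right ((hN n (hpN.trans hpn)).2 ih).not_ge
  obtain ⟨q, hpq, hq⟩ := frequently_atTop.1 (hup (-x + ε) (by linarith)) p
  have := hstay q hpq
  simp only [Pi.neg_apply] at hq
  linarith

lemma mapClusterPt_iff_liminfLE_of_noUpwardJumps_neg (hu : NoUpwardJumps (-u)) :
    MapClusterPt x atTop u ↔ LiminfLE u x ∧ LiminfLE (-u) (-x) := by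
  rw [← mapClusterPt_neg_iff, mapClusterPt_iff_liminfLE_of_noUpwardJumps hu, neg_neg, neg_neg,
    and_comm]

lemma noUpwardJumps_of_le_add {e : ℕ → ℝ} (he : Tendsto e atTop (𝓝 0))
    (h : ∀ n, u (n + 1) ≤ u n + e n) : NoUpwardJumps u := by
  intro c d hcd
  filter_upwards [he.eventually_lt_const (sub_pos.2 hcd)] with n hn hc
  linarith [h n]

lemma noUpwardJumps_neg_of_monotone (h : Monotone fun n : ℕ => ((n : ℝ) + 1) * u n) :
    NoUpwardJumps (-u) := by
  intro c d hcd
  filter_upwards [(tendsto_natCast_atTop_atTop.atTop_mul_const (sub_pos.2 hcd)).eventually_gt_atTop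
    (-d)] with n hn hc
  have hstep : ((n : ℝ) + 1) * u n ≤ ((n : ℝ) + 2) * u (n + 1) := by
    have := h n.le_succ
    push_cast at this
    linarith
  simp only [Pi.neg_apply] at hc ⊢
  -- `(n + 2) u (n + 1) ≥ (n + 1) u n ≥ -(n + 1) c > -(n + 2) d`
  nlinarith

lemma LiminfLE.of_le_mul_add {σ : ℕ → ℕ} {c e : ℕ → ℝ} (hu : LiminfLE u x)
    (hσ : Tendsto σ atTop atTop) (hc : Tendsto c atTop (𝓝 1)) (he : Tendsto e atTop (𝓝 0))
    (hle : ∀ᶠ k in atTop, v (σ k) ≤ c k * u k + e k) : LiminfLE v x := by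
  intro y hy
  obtain ⟨z, hxz, hzy⟩ := exists_between hy
  have hlim : Tendsto (fun k => c k * z + e k) atTop (𝓝 z) := by
    simpa using (hc.mul_const z).add he
  refine hσ.frequently ((hu z hxz).and_eventually
    (hle.and ((hlim.eventually_lt_const hzy).and (hc.eventually_const_lt one_pos))) |>.mono ?_)
  rintro k ⟨huk, hvk, hbound, hck⟩
  calc v (σ k) ≤ c k * u k + e k := hvk
    _ ≤ c k * z + e k := by gcongr
    _ < y := hbound

end ClusterPoints

def IsCountingFunction (lam : ℕ → ℝ) (F : ℝ → ℕ) : Prop := ∀ k t, k < F t ↔ lam k ≤ t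

lemma isCountingFunction_natCard {lam : ℕ → ℝ} (hmono : StrictMono lam)
    (htends : Tendsto lam atTop atTop) :
    IsCountingFunction lam fun t => Nat.card {k | lam k ≤ t} := by
  intro k t
  change k < Nat.card {i | lam i ≤ t} ↔ _
  constructor
  · intro hk
    by_contra! hlt
    have hsub : {i | lam i ≤ t} ⊆ Set.Iio k := fun i hi => hmono.lt_iff_lt.1 (hi.trans_lt hlt)
    have : Nat.card {i | lam i ≤ t} ≤ k :=
      (Nat.card_mono (Set.finite_Iio k) hsub).trans_eq (by simp)
    omega
  · intro hk
    have hfin : {i | lam i ≤ t}.Finite := by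
      have h : ∀ᶠ i in cofinite, t < lam i := Nat.cofinite_eq_atTop ▸ htends.eventually_gt_atTop t
      simpa using eventually_cofinite.1 h
    have hsub : Set.Iic k ⊆ {i | lam i ≤ t} := fun i hi => (hmono.monotone hi).trans hk
    have : k + 1 ≤ Nat.card {i | lam i ≤ t} := (Nat.card_mono hfin hsub).trans_eq' (by simp)
    omega

namespace IsCountingFunction

variable {lam : ℕ → ℝ} {F : ℝ → ℕ}

lemma monotone (hF : IsCountingFunction lam F) : Monotone F := fun s t hst =>
  le_of_forall_lt fun k hk => (hF k t).2 (((hF k s).1 hk).trans hst)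

lemma apply_lam (hF : IsCountingFunction lam F) (hmono : StrictMono lam) (k : ℕ) :
    F (lam k) = k + 1 :=
  le_antisymm (not_lt.1 fun h => (hmono k.lt_succ_self).not_ge ((hF _ _).1 h))
    ((hF k _).2 le_rfl)

lemma lt_lam_apply (hF : IsCountingFunction lam F) (t : ℝ) : t < lam (F t) :=
  not_le.1 fun h => lt_irrefl _ ((hF _ _).2 h)

lemma lam_apply_sub_one_le (hF : IsCountingFunction lam F) {t : ℝ} (ht : 0 < F t) :
    lam (F t - 1) ≤ t :=
  (hF _ _).1 (Nat.sub_lt ht one_pos)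

lemma tendsto_atTop (hF : IsCountingFunction lam F) : Tendsto F atTop atTop :=
  Filter.tendsto_atTop.2 fun k => (eventually_ge_atTop (lam k)).mono fun t ht => ((hF k t).2 ht).le

end IsCountingFunction

noncomputable def indexRatio (lam : ℕ → ℝ) (k : ℕ) : ℝ := (k + 1) / lam k

noncomputable def countingRatio (F : ℝ → ℕ) (n : ℕ) : ℝ := F (n + 1) / (n + 1)

lemma indexRatio_sub_one (lam : ℕ → ℝ) {k : ℕ} (hk : 0 < k) :
    indexRatio lam (k - 1) = k / lam (k - 1) := by
  simp [indexRatio, Nat.cast_pred hk]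

lemma countingRatio_sub_one (F : ℝ → ℕ) {n : ℕ} (hn : 0 < n) :
    countingRatio F (n - 1) = F n / n := by
  simp [countingRatio, Nat.cast_pred hn]

section Ratios

variable {lam : ℕ → ℝ} {F : ℝ → ℕ} {x : ℝ}

lemma noUpwardJumps_indexRatio (hmono : StrictMono lam) (hpos : ∀ k, 0 < lam k)
    (htends : Tendsto lam atTop atTop) : NoUpwardJumps (indexRatio lam) := by
  refine noUpwardJumps_of_le_add htends.inv_tendsto_atTop fun n => ?_
  calc indexRatio lam (n + 1) ≤ ((n : ℝ) + 1 + 1) / lam n := by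
        unfold indexRatio; push_cast
        gcongr
        exacts [hpos n, (hmono n.lt_succ_self).le]
    _ = indexRatio lam n + (lam n)⁻¹ := by rw [indexRatio, add_div, div_eq_mul_inv 1, one_mul]

lemma noUpwardJumps_neg_countingRatio (hF : IsCountingFunction lam F) :
    NoUpwardJumps (-countingRatio F) := by
  have hcancel (n : ℕ) : ((n : ℝ) + 1) * countingRatio F n = F ((n : ℝ) + 1) :=
    mul_div_cancel₀ _ (by positivity)
  refine noUpwardJumps_neg_of_monotone fun m n hmn => ?_
  simp only [hcancel]
  exact_mod_cast hF.monotone (by gcongr)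

lemma LiminfLE.indexRatio_of_countingRatio (hF : IsCountingFunction lam F)
    (h : LiminfLE (countingRatio F) x) : LiminfLE (indexRatio lam) x := by
  refine h.of_le_mul_add (σ := fun n => F ((n : ℝ) + 1)) (c := fun _ => 1)
    (e := fun n => 1 / ((n : ℝ) + 1))
    (hF.tendsto_atTop.comp (tendsto_atTop_add_const_right _ 1 tendsto_natCast_atTop_atTop))
    tendsto_const_nhds tendsto_one_div_add_atTop_nhds_zero_nat (Eventually.of_forall fun n => ?_)
  calc indexRatio lam (F ((n : ℝ) + 1))
      ≤ (F ((n : ℝ) + 1) + 1) / ((n : ℝ) + 1) :=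
        div_le_div_of_nonneg_left (by positivity) (by positivity) (hF.lt_lam_apply _).le
    _ = 1 * countingRatio F n + 1 / ((n : ℝ) + 1) := by rw [countingRatio, one_mul, add_div]

lemma LiminfLE.neg_indexRatio_of_neg_countingRatio (hpos : ∀ k, 0 < lam k)
    (hF : IsCountingFunction lam F) (h : LiminfLE (-countingRatio F) x) :
    LiminfLE (-indexRatio lam) x := by
  have hσ : Tendsto (fun n : ℕ => F ((n : ℝ) + 1)) atTop atTop :=
    hF.tendsto_atTop.comp (tendsto_atTop_add_const_right _ 1 tendsto_natCast_atTop_atTop)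
  refine h.of_le_mul_add (σ := fun n => F ((n : ℝ) + 1) - 1) (c := fun _ => 1) (e := fun _ => 0)
    ((tendsto_sub_atTop_nat 1).comp hσ) tendsto_const_nhds tendsto_const_nhds ?_
  filter_upwards [hσ.eventually_gt_atTop 0] with n hn
  simp only [Pi.neg_apply, one_mul, add_zero, neg_le_neg_iff, indexRatio_sub_one lam hn]
  exact div_le_div_of_nonneg_left (Nat.cast_nonneg _) (hpos _) (hF.lam_apply_sub_one_le hn)

lemma LiminfLE.countingRatio_of_indexRatio (hmono : StrictMono lam)
    (htends : Tendsto lam atTop atTop) (hF : IsCountingFunction lam F)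
    (h : LiminfLE (indexRatio lam) x) : LiminfLE (countingRatio F) x := by
  refine h.of_le_mul_add (σ := fun k => ⌊lam k⌋₊ - 1) (c := fun k => ((⌊lam k⌋₊ : ℝ) / lam k)⁻¹)
    (e := fun _ => 0) ((tendsto_sub_atTop_nat 1).comp (tendsto_nat_floor_atTop.comp htends))
    (by simpa using (tendsto_nat_floor_div_atTop.comp htends).inv₀ one_ne_zero)
    tendsto_const_nhds ?_
  filter_upwards [htends.eventually_ge_atTop 1] with k hk
  have hfloor : 0 < ⌊lam k⌋₊ := Nat.floor_pos.2 hk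
  have hcount : F ⌊lam k⌋₊ ≤ k + 1 :=
    (hF.monotone (Nat.floor_le (by linarith))).trans_eq (hF.apply_lam hmono k)
  have hratio : lam k / ⌊lam k⌋₊ * ((k + 1) / lam k) = (k + 1) / ⌊lam k⌋₊ := by
    field_simp
  rw [countingRatio_sub_one F hfloor, indexRatio, add_zero, inv_div, hratio]
  gcongr
  exact_mod_cast hcount

lemma LiminfLE.neg_countingRatio_of_neg_indexRatio (hmono : StrictMono lam)
    (htends : Tendsto lam atTop atTop) (hF : IsCountingFunction lam F)
    (h : LiminfLE (-indexRatio lam) x) : LiminfLE (-countingRatio F) x := by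
  refine h.of_le_mul_add (σ := fun k => ⌈lam k⌉₊ - 1) (c := fun k => ((⌈lam k⌉₊ : ℝ) / lam k)⁻¹)
    (e := fun _ => 0) ((tendsto_sub_atTop_nat 1).comp (tendsto_nat_ceil_atTop.comp htends))
    (by simpa using (tendsto_nat_ceil_div_atTop.comp htends).inv₀ one_ne_zero)
    tendsto_const_nhds ?_
  filter_upwards [htends.eventually_gt_atTop 0] with k hk
  have hceil : 0 < ⌈lam k⌉₊ := Nat.ceil_pos.2 hk
  have hcount : k + 1 ≤ F ⌈lam k⌉₊ :=
    (hF.apply_lam hmono k).symm.trans_le (hF.monotone (Nat.le_ceil _))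
  have hratio : lam k / ⌈lam k⌉₊ * ((k + 1) / lam k) = (k + 1) / ⌈lam k⌉₊ := by
    field_simp
  simp only [Pi.neg_apply]
  rw [countingRatio_sub_one F hceil, indexRatio, add_zero, inv_div, mul_neg, hratio,
    neg_le_neg_iff]
  gcongr
  exact_mod_cast hcount

end Ratios

/-- The set of limit points of `(k/λ_k)` coincides with the set of limit points of
`(F_Λ(n)/n)`, where `F_Λ` is the counting function of the strictly increasing
sequence `Λ` of positive reals tending to infinity. (`lam k` denotes `λ_{k+1}`.) -/
theorem limit_points_counting_eq (lam : ℕ → ℝ) (F : ℝ → ℕ)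
    (hmono : StrictMono lam) (hpos : ∀ k, 0 < lam k)
    (htends : Tendsto lam atTop atTop)
    (hF : ∀ t : ℝ, F t = Nat.card {k : ℕ | lam k ≤ t}) :
    {x : ℝ | MapClusterPt x atTop (fun k : ℕ => ((k : ℝ) + 1) / lam k)} =
    {x : ℝ | MapClusterPt x atTop (fun n : ℕ => (F ((n : ℝ) + 1) : ℝ) / ((n : ℝ) + 1))} := by
  have hcount : IsCountingFunction lam F := fun k t =>
    hF t ▸ isCountingFunction_natCard hmono htends k t
  ext x
  change MapClusterPt x atTop (indexRatio lam) ↔ MapClusterPt x atTop (countingRatio F)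
  rw [mapClusterPt_iff_liminfLE_of_noUpwardJumps (noUpwardJumps_indexRatio hmono hpos htends),
    mapClusterPt_iff_liminfLE_of_noUpwardJumps_neg (noUpwardJumps_neg_countingRatio hcount)]
  exact and_congr
    ⟨.countingRatio_of_indexRatio hmono htends hcount, .indexRatio_of_countingRatio hcount⟩
    ⟨.neg_countingRatio_of_neg_indexRatio hmono htends hcount,
      .neg_indexRatio_of_neg_countingRatio hpos hcount⟩
end

section
/- Let p ≥ 1 be an integer, a_0, …, a_{p−1} nonnegative reals, and (λ_n)_{n≥1} a sequence of reals such that lim_{k→∞} (λ_{kp+j+1} − λ_{kp+j}) = a_j for each j = 0, 1, …, p−1. Then lim_{n→∞} λ_n/n = (a_0 + a_1 + ⋯ + a_{p−1})/p. -/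
/-!
Telescoping over one period shows that along each residue class `n = k p + j` the increments
`λ_{(k+1)p+j} - λ_{kp+j}` tend to `∑ a_j`, so by Cesàro `λ_{kp+j} / k → ∑ a_j`, that is
`λ_n / n → (∑ a_j) / p` along every residue class, hence along all `n`.
-/

open Filter Topology Finset

theorem Nat.eventually_atTop_of_forall_residue {p : ℕ} (hp : 0 < p) {P : ℕ → Prop}
    (h : ∀ j < p, ∀ᶠ k in atTop, P (k * p + j)) : ∀ᶠ n in atTop, P n := by
  have hall : ∀ᶠ k in atTop, ∀ j ∈ range p, P (k * p + j) :=
    (eventually_all_finset _).2 fun j hj => h j (mem_range.1 hj)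
  obtain ⟨N, hN⟩ := eventually_atTop.1 hall
  filter_upwards [eventually_ge_atTop (N * p)] with n hn
  rw [← Nat.div_add_mod' n p]
  exact hN _ ((Nat.le_div_iff_mul_le hp).2 hn) _ (mem_range.2 (Nat.mod_lt n hp))

theorem Nat.tendsto_of_forall_residue {α : Type*} {p : ℕ} (hp : 0 < p) {f : ℕ → α}
    {l : Filter α} (h : ∀ j < p, Tendsto (fun k => f (k * p + j)) atTop l) :
    Tendsto f atTop l :=
  fun _ hs => Nat.eventually_atTop_of_forall_residue hp fun j hj => h j hj hs

theorem tendsto_div_natCast_of_tendsto_sub_succ {u : ℕ → ℝ} {L : ℝ}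
    (h : Tendsto (fun k => u (k + 1) - u k) atTop (𝓝 L)) :
    Tendsto (fun k : ℕ => u k / k) atTop (𝓝 L) := by
  have hmean := h.cesaro.add (tendsto_const_div_atTop_nhds_zero_nat (u 0))
  rw [add_zero] at hmean
  refine hmean.congr fun k => ?_
  rw [sum_range_sub u]
  ring

section PeriodicDifferences

variable {p : ℕ} {a lam : ℕ → ℝ}
  (h : ∀ j < p, Tendsto (fun k : ℕ => lam (k * p + j + 1) - lam (k * p + j)) atTop (𝓝 (a j)))
include h

theorem tendsto_sub_of_periodic_differences {j : ℕ} (hj : j ≤ p) :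
    Tendsto (fun k : ℕ => lam (k * p + j) - lam (k * p)) atTop (𝓝 (∑ i ∈ range j, a i)) := by
  have htelescope : ∀ k, lam (k * p + j) - lam (k * p)
      = ∑ i ∈ range j, (lam (k * p + i + 1) - lam (k * p + i)) := fun k =>
    (sum_range_sub (fun i => lam (k * p + i)) j).symm
  simp only [htelescope]
  exact tendsto_finsetSum _ fun i hi => h i ((mem_range.1 hi).trans_le hj)

theorem tendsto_sub_succ_of_periodic_differences {j : ℕ} (hj : j ≤ p) :
    Tendsto (fun k : ℕ => lam ((k + 1) * p + j) - lam (k * p + j)) atTop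
      (𝓝 (∑ i ∈ range p, a i)) := by
  have hshift := (tendsto_add_atTop_iff_nat 1).2 (tendsto_sub_of_periodic_differences h hj)
  have hlim := (hshift.add (tendsto_sub_of_periodic_differences h le_rfl)).sub
    (tendsto_sub_of_periodic_differences h hj)
  rw [add_sub_cancel_left] at hlim
  refine hlim.congr fun k => ?_
  rw [add_one_mul]
  ring

theorem tendsto_div_residue_of_periodic_differences (hp : 0 < p) {j : ℕ} (hj : j ≤ p) :
    Tendsto (fun k : ℕ => lam (k * p + j) / ((k * p + j : ℕ) : ℝ)) atTop
      (𝓝 ((∑ i ∈ range p, a i) / p)) := by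
  have hnum := tendsto_div_natCast_of_tendsto_sub_succ
    (u := fun k => lam (k * p + j)) (tendsto_sub_succ_of_periodic_differences h hj)
  have hden : Tendsto (fun k : ℕ => (p : ℝ) + j / k) atTop (𝓝 p) := by
    simpa using tendsto_const_nhds.add (tendsto_const_div_atTop_nhds_zero_nat (j : ℝ))
  refine (hnum.div hden (by positivity)).congr' ?_
  filter_upwards [eventually_ne_atTop 0] with k hk
  simp only [Pi.div_apply]
  push_cast
  field_simp

end PeriodicDifferences

theorem tendsto_div_of_periodic_differences_general (p : ℕ) (hp : 1 ≤ p)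
    (a : ℕ → ℝ) (lam : ℕ → ℝ)
    (h : ∀ j < p, Tendsto (fun k : ℕ => lam (k * p + j + 1) - lam (k * p + j))
      atTop (nhds (a j))) :
    Tendsto (fun n : ℕ => lam n / n) atTop
      (nhds ((∑ j ∈ Finset.range p, a j) / p)) :=
  Nat.tendsto_of_forall_residue hp fun j hj =>
    tendsto_div_residue_of_periodic_differences h hp hj.le

/-- If for each residue class `j` mod `p` the consecutive differences
`λ_{kp+j+1} - λ_{kp+j}` converge to `a j ≥ 0`, then `λ_n / n → (∑ a_j)/p`. -/
theorem tendsto_div_of_periodic_differences (p : ℕ) (hp : 1 ≤ p)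
    (a : ℕ → ℝ) (ha : ∀ j < p, 0 ≤ a j) (lam : ℕ → ℝ)
    (h : ∀ j < p, Tendsto (fun k : ℕ => lam (k * p + j + 1) - lam (k * p + j))
      atTop (nhds (a j))) :
    Tendsto (fun n : ℕ => lam n / n) atTop
      (nhds ((∑ j ∈ Finset.range p, a j) / p)) :=
  tendsto_div_of_periodic_differences_general p hp a lam h
end

section
/- Let Λ = (λ_n)_{n≥1} be a strictly increasing sequence of positive reals with lim_{n→∞} λ_n/n = ℓ > 0 and with limsup_{n→∞} (λ_{n+1} − λ_n) < +∞. Let λ̄ be the piecewise linear interpolant of Λ, and let β > 1. Then for any sequences x_n → +∞ and y_n with y_n > β x_n for all n, one has lim_{n→∞} (λ̄(y_n) − λ̄(x_n))/(y_n − x_n) = ℓ. -/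
/-!
Writing `e n = λ_n - ℓ n`, the hypothesis `λ_n / n → ℓ` says `e n = o(n)`. Since the interpolant
is affine in the sequence, `λ̄(t) - ℓ t` is the interpolant of `e`, a convex combination of
`e ⌊t⌋` and `e (⌊t⌋ + 1)`, hence `o(t)`. When `y > β x` with `β > 1` and `x ≥ 0`, both `x` and `y`
are `O(y - x)`, so the numerator `λ̄(y) - λ̄(x)` equals `ℓ (y - x) + o(y - x)`.
-/

open Filter Asymptotics Topology

noncomputable def interpolant (u : ℕ → ℝ) (t : ℝ) : ℝ :=
  (u (⌊t⌋₊ + 1) - u ⌊t⌋₊) * (t - ⌊t⌋₊) + u ⌊t⌋₊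

theorem interpolant_sub_mul (u : ℕ → ℝ) (ℓ t : ℝ) :
    interpolant u t - ℓ * t = interpolant (fun n => u n - ℓ * n) t := by
  simp only [interpolant]
  push_cast
  ring

theorem isBigO_natFloor_add_one_id :
    (fun t : ℝ => ((⌊t⌋₊ + 1 : ℕ) : ℝ)) =O[atTop] id := by
  refine IsBigO.of_bound 2 ?_
  filter_upwards [eventually_ge_atTop 1] with t ht
  have hfloor := Nat.floor_le (zero_le_one.trans ht)
  rw [id, Real.norm_of_nonneg (by positivity), Real.norm_of_nonneg (by linarith)]
  push_cast
  linarith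

theorem isBigO_natFloor_id : (fun t : ℝ => (⌊t⌋₊ : ℝ)) =O[atTop] id := by
  refine IsBigO.of_bound 1 ?_
  filter_upwards [eventually_ge_atTop 0] with t ht
  rw [id, Real.norm_of_nonneg (by positivity), Real.norm_of_nonneg ht, one_mul]
  exact Nat.floor_le ht

theorem isBigO_sub_natFloor_one : (fun t : ℝ => t - ⌊t⌋₊) =O[atTop] (fun _ => (1 : ℝ)) := by
  refine IsBigO.of_bound 1 ?_
  filter_upwards [eventually_ge_atTop 0] with t ht
  rw [Real.norm_of_nonneg (sub_nonneg.2 (Nat.floor_le ht)), norm_one, one_mul]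
  linarith [Nat.lt_floor_add_one t]

theorem isLittleO_interpolant {u : ℕ → ℝ} (hu : u =o[atTop] (fun n => (n : ℝ))) :
    interpolant u =o[atTop] id := by
  have hnext : (fun t : ℝ => u (⌊t⌋₊ + 1)) =o[atTop] id :=
    (hu.comp_tendsto ((tendsto_add_atTop_nat 1).comp tendsto_nat_floor_atTop)).trans_isBigO
      isBigO_natFloor_add_one_id
  have hcur : (fun t : ℝ => u ⌊t⌋₊) =o[atTop] id :=
    (hu.comp_tendsto tendsto_nat_floor_atTop).trans_isBigO isBigO_natFloor_id
  have hslope := (hnext.sub hcur).mul_isBigO isBigO_sub_natFloor_one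
  simp only [mul_one] at hslope
  exact hslope.add hcur

theorem isLittleO_sub_mul_of_tendsto_div {u : ℕ → ℝ} {ℓ : ℝ}
    (hu : Tendsto (fun n : ℕ => u n / n) atTop (𝓝 ℓ)) :
    (fun n : ℕ => u n - ℓ * n) =o[atTop] (fun n => (n : ℝ)) := by
  refine (isLittleO_iff_tendsto' ?_).2 ?_
  · filter_upwards [eventually_ne_atTop 0] with n hn h
    exact absurd h (Nat.cast_ne_zero.2 hn)
  · refine (tendsto_sub_nhds_zero_iff.2 hu).congr' ?_
    filter_upwards [eventually_ne_atTop 0] with n hn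
    field_simp

theorem isBigO_sub_of_mul_lt {ι : Type*} {l : Filter ι} {x y : ι → ℝ} {β : ℝ} (hβ : 1 < β)
    (hx : ∀ᶠ n in l, 0 ≤ x n) (hxy : ∀ᶠ n in l, β * x n < y n) :
    x =O[l] (fun n => y n - x n) ∧ y =O[l] (fun n => y n - x n) := by
  have hβ' : 0 < β - 1 := sub_pos.2 hβ
  have hx_le : ∀ᶠ n in l, x n ≤ (β - 1)⁻¹ * (y n - x n) := by
    filter_upwards [hxy] with n hn
    rw [le_inv_mul_iff₀ hβ']
    linarith
  constructor
  · refine IsBigO.of_bound (β - 1)⁻¹ ?_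
    filter_upwards [hx, hxy, hx_le] with n h0 hn hle
    rw [Real.norm_of_nonneg h0, Real.norm_of_nonneg (by nlinarith)]
    exact hle
  · refine IsBigO.of_bound (1 + (β - 1)⁻¹) ?_
    filter_upwards [hx, hxy, hx_le] with n h0 hn hle
    rw [Real.norm_of_nonneg (by nlinarith), Real.norm_of_nonneg (by nlinarith)]
    linarith

theorem tendsto_div_sub_of_isLittleO {ι : Type*} {l : Filter ι} {f : ℝ → ℝ} {ℓ β : ℝ}
    (hβ : 1 < β) (hf : (fun t => f t - ℓ * t) =o[atTop] id) {x y : ι → ℝ}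
    (hx : Tendsto x l atTop) (hxy : ∀ᶠ n in l, β * x n < y n) :
    Tendsto (fun n => (f (y n) - f (x n)) / (y n - x n)) l (𝓝 ℓ) := by
  have hx0 : ∀ᶠ n in l, 0 ≤ x n := hx.eventually_ge_atTop 0
  have hy : Tendsto y l atTop :=
    tendsto_atTop_mono' l (hxy.mono fun _ h => h.le) (hx.const_mul_atTop (by linarith))
  obtain ⟨hxO, hyO⟩ := isBigO_sub_of_mul_lt hβ hx0 hxy
  have hsmall := ((hf.comp_tendsto hy).trans_isBigO hyO).sub
    ((hf.comp_tendsto hx).trans_isBigO hxO)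
  have hlim := tendsto_const_nhds (x := ℓ) |>.add hsmall.tendsto_div_nhds_zero
  rw [add_zero] at hlim
  refine hlim.congr' ?_
  filter_upwards [hx0, hxy] with n h0 hn
  have hne : y n - x n ≠ 0 := by nlinarith
  simp only [Function.comp_apply]
  field_simp
  ring

theorem interpolant_increment_ratio_tendsto_general (lam : ℕ → ℝ) (lbar : ℝ → ℝ)
    (ℓ β : ℝ) (hβ : 1 < β)
    (hlim : Tendsto (fun n : ℕ => lam n / n) atTop (nhds ℓ))
    (hbar : ∀ x : ℝ, 0 ≤ x →
      lbar x = (lam (⌊x⌋₊ + 1) - lam ⌊x⌋₊) * (x - ⌊x⌋₊) + lam ⌊x⌋₊)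
    (x y : ℕ → ℝ) (hx : Tendsto x atTop atTop)
    (hxy : ∀ n, β * x n < y n) :
    Tendsto (fun n : ℕ => (lbar (y n) - lbar (x n)) / (y n - x n)) atTop (nhds ℓ) := by
  have hbar' : lbar =ᶠ[atTop] interpolant lam := (eventually_ge_atTop 0).mono hbar
  have herr : (fun t => lbar t - ℓ * t) =o[atTop] id := by
    refine (isLittleO_interpolant (isLittleO_sub_mul_of_tendsto_div hlim)).congr' ?_
      EventuallyEq.rfl
    filter_upwards [hbar'] with t ht
    rw [ht, interpolant_sub_mul]
  exact tendsto_div_sub_of_isLittleO hβ herr hx (Eventually.of_forall hxy)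

/-- If `λ_n / n → ℓ > 0`, the consecutive differences have finite limsup, and
`x_n → +∞` with `y_n > β x_n` for a fixed `β > 1`, then
`(λ̄(y_n) - λ̄(x_n))/(y_n - x_n) → ℓ`. -/
theorem interpolant_increment_ratio_tendsto (lam : ℕ → ℝ) (lbar : ℝ → ℝ)
    (ℓ β : ℝ) (hl : 0 < ℓ) (hβ : 1 < β)
    (hmono : StrictMono lam) (hpos : ∀ n, 0 < lam n)
    (hlim : Tendsto (fun n : ℕ => lam n / n) atTop (nhds ℓ))
    (hdiff : limsup (fun n : ℕ => ((lam (n + 1) - lam n : ℝ) : EReal)) atTop < ⊤)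
    (hbar : ∀ x : ℝ, 0 ≤ x →
      lbar x = (lam (⌊x⌋₊ + 1) - lam ⌊x⌋₊) * (x - ⌊x⌋₊) + lam ⌊x⌋₊)
    (x y : ℕ → ℝ) (hx : Tendsto x atTop atTop) (hx0 : ∀ n, 0 ≤ x n)
    (hxy : ∀ n, β * x n < y n) :
    Tendsto (fun n : ℕ => (lbar (y n) - lbar (x n)) / (y n - x n)) atTop (nhds ℓ) :=
  interpolant_increment_ratio_tendsto_general lam lbar ℓ β hβ hlim hbar x y hx hxy
end

section
/- Let 1 ≤ p ≤ 9 and let Λ be the increasing sequence of positive integers with first decimal digit equal to p. Then the upper asymptotic density of Λ equals 10/(9(p+1)). -/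
open Filter

/-!
The integers with leading digit `p` in base `b` form the blocks `[p bʲ, (p + 1) bʲ)`, of length
`bʲ`. At the end `(p + 1) bᵏ - 1` of the `k`-th block one has counted
`1 + b + ⋯ + bᵏ = (bᵏ⁺¹ - 1) / (b - 1)` of them, so there the ratio is at least
`b / ((b - 1)(p + 1))`. It is at most that plus `O(1/n)` everywhere, because inside a block the
ratio increases towards its value at the block end, and in a gap between blocks it decreases.
-/

open Finset Topology

-- `leadingDigit b 0 = 0` is a junk value
def leadingDigit (b m : ℕ) : ℕ := m / b ^ Nat.log b m

def leadingDigitCount (b p n : ℕ) : ℕ := ((Icc 1 n).filter fun m => leadingDigit b m = p).card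

section Counting

variable {b p : ℕ}

theorem leadingDigit_eq_and_log_eq_iff (hp : 0 < p) (hpb : p < b) {m j : ℕ} :
    leadingDigit b m = p ∧ Nat.log b m = j ↔ m ∈ Ico (p * b ^ j) ((p + 1) * b ^ j) := by
  have hpow : 0 < b ^ j := pow_pos (hp.trans hpb) j
  rw [mem_Ico]
  constructor
  · rintro ⟨hdigit, rfl⟩
    rw [leadingDigit] at hdigit
    subst hdigit
    exact ⟨Nat.div_mul_le_self m _, (Nat.div_lt_iff_lt_mul hpow).mp (Nat.lt_succ_self _)⟩
  · rintro ⟨hlo, hhi⟩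
    have hlog : Nat.log b m = j := by
      refine Nat.log_eq_of_pow_le_of_lt_pow (le_trans ?_ hlo) (lt_of_lt_of_le hhi ?_)
      · exact Nat.le_mul_of_pos_left _ hp
      · rw [pow_succ']
        exact Nat.mul_le_mul_right _ hpb
    exact ⟨by rw [leadingDigit, hlog]; exact Nat.div_eq_of_lt_le hlo hhi, hlog⟩

theorem leadingDigitCount_eq_sum (hp : 0 < p) (hpb : p < b) {n K : ℕ} (hn : n < b ^ K) :
    leadingDigitCount b p n = ∑ j ∈ range K, (min ((p + 1) * b ^ j) (n + 1) - p * b ^ j) := by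
  rw [leadingDigitCount, card_eq_sum_card_fiberwise (f := Nat.log b) (t := range K)]
  · refine sum_congr rfl fun j _ => ?_
    have hfiber : ((Icc 1 n).filter fun m => leadingDigit b m = p).filter (Nat.log b · = j) =
        Ico (p * b ^ j) (min ((p + 1) * b ^ j) (n + 1)) := by
      ext m
      have hblock := leadingDigit_eq_and_log_eq_iff hp hpb (m := m) (j := j)
      have hstart : 0 < p * b ^ j := Nat.mul_pos hp (pow_pos (hp.trans hpb) j)
      simp only [mem_filter, mem_Icc, mem_Ico, lt_min_iff] at hblock ⊢
      omega
    rw [hfiber, Nat.card_Ico]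
  · intro m hm
    rw [mem_coe, mem_filter, mem_Icc] at hm
    exact mem_coe.mpr (mem_range.mpr (Nat.log_lt_of_lt_pow (by omega) (by omega)))

theorem geom_sum_pred_mul_add (hb : 0 < b) (k : ℕ) :
    (b - 1) * ∑ j ∈ range k, b ^ j + 1 = b ^ k := by
  obtain ⟨a, rfl⟩ := Nat.exists_eq_add_of_lt hb
  simpa [mul_comm] using geom_sum_mul_add a k

theorem leadingDigitCount_block_end (hp : 0 < p) (hpb : p < b) (k : ℕ) :
    (b - 1) * leadingDigitCount b p ((p + 1) * b ^ k - 1) + 1 = b ^ (k + 1) := by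
  have hpow : ∀ j, 0 < b ^ j := pow_pos (hp.trans hpb)
  have hend : (p + 1) * b ^ k ≤ b ^ (k + 1) := by
    rw [pow_succ']
    exact Nat.mul_le_mul_right _ hpb
  have hsum : leadingDigitCount b p ((p + 1) * b ^ k - 1) = ∑ j ∈ range (k + 1), b ^ j := by
    have hpos : 1 ≤ (p + 1) * b ^ k := Nat.mul_pos (Nat.succ_pos p) (hpow k)
    rw [leadingDigitCount_eq_sum hp hpb (K := k + 1) (by omega), Nat.sub_add_cancel hpos]
    refine sum_congr rfl fun j hj => ?_
    have hjk : (p + 1) * b ^ j ≤ (p + 1) * b ^ k :=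
      Nat.mul_le_mul_left _
        (Nat.pow_le_pow_right (hp.trans hpb) (Nat.lt_succ_iff.mp (mem_range.mp hj)))
    rw [min_eq_left hjk, add_mul, one_mul, Nat.add_sub_cancel_left]
  rw [hsum, geom_sum_pred_mul_add (hp.trans hpb)]

theorem leadingDigitCount_le (hp : 0 < p) (hpb : p < b) (n : ℕ) :
    (b - 1) * (p + 1) * leadingDigitCount b p n + (p + 1) ≤ b * (n + 1) := by
  rcases n.eq_zero_or_pos with rfl | hn
  · simpa [leadingDigitCount] using hpb
  have hb : 1 < b := lt_of_le_of_lt hp hpb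
  set k := Nat.log b n
  have hlow : b ^ k ≤ n := Nat.pow_log_le_self b hn.ne'
  have hterm : ∀ j, min ((p + 1) * b ^ j) (n + 1) - p * b ^ j ≤ b ^ j := fun j => by
    rw [add_mul, one_mul]
    omega
  have hlower := sum_le_sum fun j (_ : j ∈ range k) => hterm j
  have htop : min ((p + 1) * b ^ k) (n + 1) - p * b ^ k = 0 ∨
      p * b ^ k + (min ((p + 1) * b ^ k) (n + 1) - p * b ^ k) ≤ n + 1 := by omega
  have hgeom := geom_sum_pred_mul_add (b := b) (by omega) k
  rw [leadingDigitCount_eq_sum hp hpb (Nat.lt_pow_succ_log_self hb n), sum_range_succ]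
  generalize ∑ j ∈ range k, (min ((p + 1) * b ^ j) (n + 1) - p * b ^ j) = lower at hlower ⊢
  have htop_le := hterm k
  generalize min ((p + 1) * b ^ k) (n + 1) - p * b ^ k = top at htop htop_le ⊢
  generalize ∑ j ∈ range k, b ^ j = S at hlower hgeom
  generalize b ^ k = B at *
  obtain ⟨a, rfl⟩ : ∃ a, b = a + 1 := ⟨b - 1, by omega⟩
  simp only [Nat.add_sub_cancel] at hgeom ⊢
  have hpa : p + 1 ≤ a + 1 := hpb
  rcases htop with rfl | htop
  · nlinarith [Nat.mul_le_mul_left (a * (p + 1)) hlower, Nat.mul_le_mul hpa hlow]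
  · -- the slack is `(a p - 1) (B - top)`
    obtain ⟨d, rfl⟩ := Nat.exists_eq_add_of_le htop_le
    have hap : 1 ≤ a * p := Nat.mul_pos (by omega) hp
    nlinarith [Nat.mul_le_mul_left (a * (p + 1)) hlower, Nat.mul_le_mul_right d hap]

end Counting

theorem limsup_eq_of_le_add_div_of_frequently_le {u : ℕ → ℝ} {L C : ℝ}
    (hle : ∀ᶠ n in atTop, u n ≤ L + C / n) (hge : ∃ᶠ n in atTop, L ≤ u n) :
    limsup u atTop = L := by
  have hlim : Tendsto (fun n : ℕ => L + C / n) atTop (𝓝 L) := by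
    simpa using tendsto_const_nhds.add (tendsto_const_div_atTop_nhds_zero_nat C)
  refine le_antisymm ?_ (le_limsup_of_frequently_le hge (hlim.isBoundedUnder_le.mono_le hle))
  calc limsup u atTop ≤ limsup (fun n : ℕ => L + C / n) atTop :=
        limsup_le_limsup hle (IsCoboundedUnder.of_frequently_ge hge) hlim.isBoundedUnder_le
    _ = L := hlim.limsup_eq

section Density

variable {b p : ℕ}

theorem leadingDigitCount_div_le (hp : 0 < p) (hpb : p < b) {n : ℕ} (hn : 0 < n) :
    (leadingDigitCount b p n : ℝ) / n ≤
      b / ((b - 1) * (p + 1)) + b / ((b - 1) * (p + 1)) / n := by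
  have hb : (1 : ℝ) < b := by exact_mod_cast lt_of_le_of_lt hp hpb
  have hden : (0 : ℝ) < (b - 1) * (p + 1) := by nlinarith
  have hcount := leadingDigitCount_le hp hpb n
  rw [← Nat.cast_le (α := ℝ)] at hcount
  push_cast [Nat.cast_sub (lt_of_le_of_lt hp hpb).le] at hcount
  calc (leadingDigitCount b p n : ℝ) / n ≤ b * (n + 1) / ((b - 1) * (p + 1)) / n := by
        gcongr
        rw [le_div_iff₀ hden]
        nlinarith
    _ = _ := by field_simp

theorem div_le_leadingDigitCount_block_end_div (hp : 0 < p) (hpb : p < b) (k : ℕ) :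
    (b : ℝ) / ((b - 1) * (p + 1)) ≤
      (leadingDigitCount b p ((p + 1) * b ^ k - 1) : ℝ) / ((p + 1) * b ^ k - 1 : ℕ) := by
  have hb : (1 : ℝ) < b := by exact_mod_cast lt_of_le_of_lt hp hpb
  have hden : (0 : ℝ) < (b - 1) * (p + 1) := by nlinarith
  have hend : 2 * 1 ≤ (p + 1) * b ^ k :=
    Nat.mul_le_mul (by omega : 2 ≤ p + 1) (Nat.one_le_pow _ _ (hp.trans hpb))
  have hn : (0 : ℝ) < ((p + 1) * b ^ k - 1 : ℕ) := by
    exact_mod_cast (by omega : 0 < (p + 1) * b ^ k - 1)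
  have hcount := leadingDigitCount_block_end hp hpb k
  rw [← Nat.cast_inj (R := ℝ)] at hcount
  rw [div_le_div_iff₀ hden hn]
  push_cast [Nat.cast_sub (lt_of_le_of_lt hp hpb).le,
    Nat.cast_sub (by omega : 1 ≤ (p + 1) * b ^ k), pow_succ] at hcount ⊢
  have hpb' : (p : ℝ) + 1 ≤ b := by exact_mod_cast hpb
  linear_combination -((p : ℝ) + 1) * hcount + hpb'

theorem limsup_leadingDigitCount_div (hp : 0 < p) (hpb : p < b) :
    limsup (fun n : ℕ => (leadingDigitCount b p n : ℝ) / n) atTop =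
      b / ((b - 1) * (p + 1)) := by
  refine limsup_eq_of_le_add_div_of_frequently_le
    ((eventually_gt_atTop 0).mono fun n hn => leadingDigitCount_div_le hp hpb hn) ?_
  refine frequently_atTop.mpr fun N => ⟨(p + 1) * b ^ N - 1, ?_,
    div_le_leadingDigitCount_block_end_div hp hpb N⟩
  have hpow : N < b ^ N := Nat.lt_pow_self (lt_of_le_of_lt hp hpb)
  have hblock : 2 * b ^ N ≤ (p + 1) * b ^ N := Nat.mul_le_mul_right _ (by omega)
  omega

end Density

/-- The upper asymptotic density of the set of positive integers with leading
decimal digit `p` equals `10/(9(p+1))`. -/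
theorem first_digit_upper_density (p : ℕ) (hp : 1 ≤ p) (hp9 : p ≤ 9) (F : ℕ → ℕ)
    (hF : ∀ t : ℕ, F t =
      ((Finset.Icc 1 t).filter (fun m => m / 10 ^ (Nat.log 10 m) = p)).card) :
    limsup (fun n : ℕ => (F n : ℝ) / n) atTop = 10 / (9 * ((p : ℝ) + 1)) := by
  obtain rfl : F = leadingDigitCount 10 p := funext hF
  rw [limsup_leadingDigitCount_div hp (by omega)]
  norm_num
end

section
/- Let ℓ > 0 and λ_n = ℓn + ψ_n, where (ψ_n)_{n≥1} is eventually non-decreasing and λ_n > 0 for all n. Then there exists a sequence of distinct positive integers (n_k)_{k≥1} (namely n_k = k + ⌊ψ_k/ℓ⌋, eventually) such that Σ_{k=1}^∞ |1/λ_k − (1/ℓ)/n_k| < +∞. -/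
/-! If `ψ` is non-decreasing from `N` on, take `n_k = k + 1 + ⌈(ψ_{max k N} - ψ_N)/ℓ⌉₊`: it is
strictly increasing, and `ℓ n_k - λ_k` stays bounded. Since `ℓ n_k` and `λ_k` both grow linearly,
`|1/λ_k - 1/(ℓ n_k)| = |ℓ n_k - λ_k| / (λ_k ℓ n_k) = O(1/k²)`. -/

open Filter

theorem summable_abs_one_div_sub_one_div_of_abs_sub_le {a b : ℕ → ℝ} {c M : ℝ} (hc : 0 < c)
    (hb : ∀ᶠ k in atTop, c * k ≤ b k) (hab : ∀ᶠ k in atTop, |a k - b k| ≤ M) :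
    Summable fun k => |1 / a k - 1 / b k| := by
  obtain ⟨K, hK⟩ := exists_nat_gt (2 * M / c)
  refine .of_norm_bounded_eventually_nat
    ((Real.summable_one_div_nat_pow.mpr one_lt_two).mul_left (2 * M / c ^ 2)) ?_
  filter_upwards [hb, hab, eventually_gt_atTop K] with k hbk habk hk
  have hM : 0 ≤ M := (abs_nonneg _).trans habk
  have hkc : 2 * M < c * k := by
    rw [div_lt_iff₀ hc] at hK
    nlinarith [(Nat.cast_lt (α := ℝ)).mpr hk]
  have hk0 : (0 : ℝ) < k := by nlinarith
  have hak : c * k / 2 ≤ a k := by linarith [(abs_le.mp habk).1]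
  have hbk0 : 0 < b k := by nlinarith
  have hak0 : 0 < a k := by nlinarith
  calc ‖|1 / a k - 1 / b k|‖ = |a k - b k| / (a k * b k) := by
        rw [Real.norm_eq_abs, abs_abs, div_sub_div _ _ hak0.ne' hbk0.ne', abs_div,
          abs_of_pos (mul_pos hak0 hbk0), one_mul, mul_one, abs_sub_comm]
    _ ≤ M / (c * k / 2 * (c * k)) :=
        div_le_div₀ hM habk (by positivity) (mul_le_mul hak hbk (by positivity) hak0.le)
    _ = 2 * M / c ^ 2 * (1 / (k : ℝ) ^ 2) := by field_simp

theorem exists_monotone_nat_abs_sub_mul_le_of_monotoneOn_Ici {ψ : ℕ → ℝ} {N : ℕ}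
    (hψ : MonotoneOn ψ (Set.Ici N)) {ℓ : ℝ} (hl : 0 < ℓ) :
    ∃ m : ℕ → ℕ, Monotone m ∧ ∃ M, ∀ᶠ k in atTop, |ψ k - ℓ * m k| ≤ M := by
  refine ⟨fun k => ⌈(ψ (max k N) - ψ N) / ℓ⌉₊, fun i j hij => ?_, ℓ + |ψ N|, ?_⟩
  · refine Nat.ceil_mono (div_le_div_of_nonneg_right (sub_le_sub_right ?_ _) hl.le)
    exact hψ (le_max_right i N) (le_max_right j N) (max_le_max_right N hij)
  filter_upwards [eventually_ge_atTop N] with k hk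
  have hx : 0 ≤ (ψ k - ψ N) / ℓ := div_nonneg (sub_nonneg.mpr (hψ Set.self_mem_Ici hk hk)) hl.le
  have hℓx : ℓ * ((ψ k - ψ N) / ℓ) = ψ k - ψ N := mul_div_cancel₀ _ hl.ne'
  have hle := mul_le_mul_of_nonneg_left (Nat.le_ceil ((ψ k - ψ N) / ℓ)) hl.le
  have hlt := mul_lt_mul_of_pos_left (Nat.ceil_lt_add_one hx) hl
  rw [mul_add_one] at hlt
  rw [max_eq_left hk, abs_le]
  constructor <;> linarith [le_abs_self (ψ N), neg_abs_le (ψ N)]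

/-- Indices are shifted by one: `lam k` is `λ_{k+1}`. -/
theorem summable_of_eventually_monotone_perturbation_general (ℓ : ℝ) (hl : 0 < ℓ)
    (lam ψ : ℕ → ℝ)
    (hdef : ∀ n : ℕ, lam n = ℓ * (n + 1) + ψ n)
    (hψ : ∃ N : ℕ, ∀ m n : ℕ, N ≤ m → m ≤ n → ψ m ≤ ψ n) :
    ∃ nk : ℕ → ℕ, Function.Injective nk ∧ (∀ k, 0 < nk k) ∧
      Summable (fun k : ℕ => |1 / lam k - (1 / ℓ) / (nk k : ℝ)|) := by
  obtain ⟨N, hN⟩ := hψ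
  obtain ⟨m, hm, M, hM⟩ :=
    exists_monotone_nat_abs_sub_mul_le_of_monotoneOn_Ici (fun i hi j _ hij => hN i j hi hij) hl
  have hn : StrictMono fun k => k + 1 + m k := (strictMono_id.add_const 1).add_monotone hm
  refine ⟨fun k => k + 1 + m k, hn.injective, fun _ => by positivity, ?_⟩
  simp_rw [div_div]
  refine summable_abs_one_div_sub_one_div_of_abs_sub_le (b := fun k => ℓ * (k + 1 + m k : ℕ))
    (M := M) hl (.of_forall fun k => ?_) (hM.mono fun k hk => ?_)
  · push_cast
    gcongr
    linarith [(m k).cast_nonneg (α := ℝ)]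
  · rw [hdef]
    push_cast
    convert hk using 2
    ring

/-- If `λ_n = ℓ n + ψ_n > 0` with `ψ` eventually non-decreasing, then there exists a
sequence of distinct positive integers `n_k` with `∑ |1/λ_k − (1/ℓ)/n_k| < ∞`.
(Indices are shifted by one: `lam k` denotes `λ_{k+1}`.) -/
theorem summable_of_eventually_monotone_perturbation (ℓ : ℝ) (hl : 0 < ℓ)
    (lam ψ : ℕ → ℝ)
    (hdef : ∀ n : ℕ, lam n = ℓ * (n + 1) + ψ n)
    (hpos : ∀ n : ℕ, 0 < lam n)
    (hψ : ∃ N : ℕ, ∀ m n : ℕ, N ≤ m → m ≤ n → ψ m ≤ ψ n) :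
    ∃ nk : ℕ → ℕ, Function.Injective nk ∧ (∀ k, 0 < nk k) ∧
      Summable (fun k : ℕ => |1 / lam k - (1 / ℓ) / (nk k : ℝ)|) :=
  summable_of_eventually_monotone_perturbation_general ℓ hl lam ψ hdef hψ
end

section
/- Let Λ = (λ_n)_{n≥1} be a strictly increasing sequence of positive reals with liminf_{n→∞} (λ_{n+1} − λ_n) = ℓ > 0, and let 0 < ε < ℓ. Define n_k = ⌊λ_k/(ℓ−ε)⌋. Then the n_k are eventually pairwise distinct positive integers and Σ_{k=1}^∞ |1/λ_k − (1/(ℓ−ε))/n_k| < +∞; consequently the Beurling–Malliavin density satisfies b(Λ) ≤ 1/ℓ. -/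
open Filter ENNReal

/-- The Beurling–Malliavin density of a sequence, following Redheffer: the infimum
of the `a ≥ 0` for which there exists a sequence of distinct positive integers
`(n_k)` with `∑ |1/λ_k − a/n_k| < ∞` (and `+∞` if no such `a` exists). -/
noncomputable def BMdensity (lam : ℕ → ℝ) : ℝ≥0∞ :=
  sInf {a : ℝ≥0∞ | a ≠ ⊤ ∧ ∃ nk : ℕ → ℕ, Function.Injective nk ∧ (∀ k, 0 < nk k) ∧
    Summable (fun k : ℕ => |1 / lam k - a.toReal / (nk k : ℝ)|)}

/-!
For `0 < c < ℓ` the gaps of `λ` eventually exceed `c`, so `λ_k` grows at least like `c k` and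
the integers `⌊λ_k / c⌋` eventually increase strictly. Since `c ⌊λ_k / c⌋` differs from `λ_k`
by less than `c`, the error `|1/λ_k − (1/c)/⌊λ_k / c⌋|` is `O(1/λ_k²) = O(1/k²)`, and the same
holds after adding a fixed shift to `⌊λ_k / c⌋`, which makes room to redefine the first terms
injectively. Hence `b(Λ) ≤ 1/c` for every `c < ℓ`, and letting `c → ℓ` gives `b(Λ) ≤ 1/ℓ`.
-/

open Set Topology

section Floor

variable {K : Type*} [Field K] [LinearOrder K] [IsStrictOrderedRing K] [FloorSemiring K]

theorem Nat.floor_div_lt_floor_div {a b c : K} (hc : 0 < c) (ha : 0 ≤ a) (hab : a + c ≤ b) :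
    ⌊a / c⌋₊ < ⌊b / c⌋₊ := by
  have hdiv : a / c + 1 ≤ b / c := by
    rw [div_add_one hc.ne']
    gcongr
  calc ⌊a / c⌋₊ < ⌊a / c⌋₊ + 1 := Nat.lt_succ_self _
    _ = ⌊a / c + 1⌋₊ := (Nat.floor_add_one (div_nonneg ha hc.le)).symm
    _ ≤ ⌊b / c⌋₊ := Nat.floor_le_floor hdiv

theorem abs_one_div_sub_div_floor_le {x c : K} (hc : 0 < c) (hx : 2 * c ≤ x) (s : ℕ) :
    |1 / x - (1 / c) / ((⌊x / c⌋₊ + s : ℕ) : K)| ≤ 2 * c * (s + 1) / x ^ 2 := by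
  set B := c * ((⌊x / c⌋₊ : K) + s)
  have hfloor_le : c * ⌊x / c⌋₊ ≤ x := by
    have := Nat.floor_le (div_nonneg (by linarith) hc.le) (a := x / c)
    rwa [le_div_iff₀' hc] at this
  have hlt_floor : x < c * (⌊x / c⌋₊ + 1) := by
    have := Nat.lt_floor_add_one (x / c)
    rwa [div_lt_iff₀' hc] at this
  have hs : (0 : K) ≤ s := s.cast_nonneg
  -- `B > x - c ≥ x / 2`
  have hB : x / 2 ≤ B := by simp only [B]; nlinarith
  have hBx : |B - x| ≤ c * (s + 1) := by
    rw [abs_le]; constructor <;> simp only [B] <;> nlinarith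
  have hx0 : 0 < x := by linarith
  have hB0 : 0 < B := by linarith
  calc |1 / x - (1 / c) / ((⌊x / c⌋₊ + s : ℕ) : K)|
      = |B - x| / (x * B) := by
        rw [Nat.cast_add, div_div]
        change |1 / x - 1 / B| = _
        rw [div_sub_div _ _ hx0.ne' hB0.ne', one_mul, mul_one, abs_div,
          abs_of_pos (mul_pos hx0 hB0)]
    _ ≤ c * (s + 1) / (x * (x / 2)) := by gcongr
    _ = 2 * c * (s + 1) / x ^ 2 := by field_simp

end Floor

theorem exists_add_le_of_lt_liminf_sub {lam : ℕ → ℝ} {c : ℝ} (hmono : Monotone lam)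
    (h : c < liminf (fun n => lam (n + 1) - lam n) atTop) :
    ∃ N, ∀ n, N ≤ n → lam n + c ≤ lam (n + 1) := by
  have hbdd : IsBoundedUnder (· ≥ ·) atTop fun n => lam (n + 1) - lam n :=
    isBoundedUnder_of ⟨0, fun n => sub_nonneg.2 (hmono n.le_succ)⟩
  obtain ⟨N, hN⟩ := eventually_atTop.1 (eventually_lt_of_lt_liminf h hbdd)
  exact ⟨N, fun n hn => by linarith [hN n hn]⟩

section Gaps

variable {lam : ℕ → ℝ} {c : ℝ} {N : ℕ}

theorem add_mul_le_of_add_le_succ (hgap : ∀ n, N ≤ n → lam n + c ≤ lam (n + 1)) (n : ℕ) :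
    lam N + n * c ≤ lam (n + N) := by
  induction n with
  | zero => simp
  | succ n ih =>
    have := hgap (n + N) (Nat.le_add_left N n)
    rw [Nat.cast_succ, add_right_comm n 1 N]
    linarith

theorem strictMonoOn_floor_div (hc : 0 < c) (hnonneg : ∀ n, 0 ≤ lam n)
    (hgap : ∀ n, N ≤ n → lam n + c ≤ lam (n + 1)) :
    StrictMonoOn (fun k => ⌊lam k / c⌋₊) (Ici N) :=
  strictMonoOn_of_lt_succ ordConnected_Ici fun n _ hn _ => by
    rw [Order.succ_eq_add_one]
    exact Nat.floor_div_lt_floor_div hc (hnonneg n) (hgap n hn)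

theorem summable_abs_one_div_sub_div_floor_add (hc : 0 < c) (hnonneg : ∀ n, 0 ≤ lam n)
    (hgap : ∀ n, N ≤ n → lam n + c ≤ lam (n + 1)) (s : ℕ) :
    Summable fun k => |1 / lam k - (1 / c) / ((⌊lam k / c⌋₊ + s : ℕ) : ℝ)| := by
  rw [← summable_nat_add_iff N]
  have hsq : Summable fun n : ℕ => 2 * (s + 1) / c * (1 / (n : ℝ) ^ 2) :=
    (Real.summable_one_div_nat_pow.2 one_lt_two).mul_left _
  refine hsq.of_norm_bounded_eventually_nat ?_
  filter_upwards [eventually_ge_atTop 2] with n hn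
  have hn' : (2 : ℝ) ≤ n := by exact_mod_cast hn
  have hlin : n * c ≤ lam (n + N) := by
    linarith [add_mul_le_of_add_le_succ hgap n, hnonneg N]
  have hx : 2 * c ≤ lam (n + N) := by nlinarith
  calc ‖|1 / lam (n + N) - (1 / c) / ((⌊lam (n + N) / c⌋₊ + s : ℕ) : ℝ)|‖
      ≤ 2 * c * (s + 1) / lam (n + N) ^ 2 := by
        rw [Real.norm_eq_abs, abs_abs]
        exact abs_one_div_sub_div_floor_le hc hx s
    _ ≤ 2 * c * (s + 1) / (n * c) ^ 2 := by gcongr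
    _ = 2 * (s + 1) / c * (1 / (n : ℝ) ^ 2) := by field_simp

theorem BMdensity_le_ofReal_one_div (hc : 0 < c) (hnonneg : ∀ n, 0 ≤ lam n)
    (hgap : ∀ n, N ≤ n → lam n + c ≤ lam (n + 1)) :
    BMdensity lam ≤ ENNReal.ofReal (1 / c) := by
  set f : ℕ → ℕ := fun k => ⌊lam k / c⌋₊
  have hf : StrictMonoOn f (Ici N) := strictMonoOn_floor_div hc hnonneg hgap
  let nk : ℕ → ℕ := fun k => if k < N then k + 1 else f k + (N + 1)
  refine sInf_le ⟨ofReal_ne_top, nk, ?_, fun k => by dsimp only [nk]; split_ifs <;> omega, ?_⟩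
  · intro j k hjk
    simp only [nk] at hjk
    split_ifs at hjk with hj hk hk
    · omega
    · omega
    · omega
    · exact hf.injOn (not_lt.1 hj) (not_lt.1 hk) (by omega)
  · rw [toReal_ofReal (by positivity)]
    refine (summable_abs_one_div_sub_div_floor_add hc hnonneg hgap (N + 1)
      ).of_norm_bounded_eventually_nat ?_
    filter_upwards [eventually_ge_atTop N] with k hk
    simp [nk, not_lt.2 hk, f]

end Gaps

theorem BMdensity_le_ofReal_one_div_liminf {lam : ℕ → ℝ} {ℓ : ℝ} (hmono : Monotone lam)
    (hnonneg : ∀ n, 0 ≤ lam n) (hliminf : liminf (fun n => lam (n + 1) - lam n) atTop = ℓ)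
    (hl : 0 < ℓ) :
    BMdensity lam ≤ ENNReal.ofReal (1 / ℓ) := by
  have hlim : Tendsto (fun c => ENNReal.ofReal (1 / c)) (𝓝[<] ℓ) (𝓝 (ENNReal.ofReal (1 / ℓ))) :=
    ((ENNReal.continuous_ofReal.tendsto _).comp
      ((continuousAt_const.div continuousAt_id hl.ne').tendsto)).mono_left nhdsWithin_le_nhds
  refine ge_of_tendsto hlim ?_
  filter_upwards [Ioo_mem_nhdsLT hl] with c ⟨hc, hcl⟩
  obtain ⟨N, hgap⟩ := exists_add_le_of_lt_liminf_sub hmono (hliminf ▸ hcl)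
  exact BMdensity_le_ofReal_one_div hc hnonneg hgap

theorem BM_density_le_of_liminf_gaps_general (lam : ℕ → ℝ) (ℓ ε : ℝ)
    (hmono : StrictMono lam) (hpos : ∀ n, 0 < lam n)
    (hliminf : liminf (fun n : ℕ => lam (n + 1) - lam n) atTop = ℓ)
    (hε : 0 < ε) (hεl : ε < ℓ)
    (nk : ℕ → ℕ) (hnk : ∀ k : ℕ, nk k = ⌊lam k / (ℓ - ε)⌋₊) :
    (∃ N : ℕ, ∀ j k : ℕ, N ≤ j → N ≤ k → j ≠ k → nk j ≠ nk k) ∧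
    (∃ N : ℕ, ∀ k : ℕ, N ≤ k → 0 < nk k) ∧
    Summable (fun k : ℕ => |1 / lam k - (1 / (ℓ - ε)) / (nk k : ℝ)|) ∧
    BMdensity lam ≤ ENNReal.ofReal (1 / ℓ) := by
  have hc : 0 < ℓ - ε := sub_pos.2 hεl
  have hnonneg : ∀ n, 0 ≤ lam n := fun n => (hpos n).le
  obtain ⟨N, hgap⟩ := exists_add_le_of_lt_liminf_sub hmono.monotone
    (by rw [hliminf]; linarith : ℓ - ε < _)
  obtain rfl : nk = fun k => ⌊lam k / (ℓ - ε)⌋₊ := funext hnk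
  have hfloor := strictMonoOn_floor_div hc hnonneg hgap
  refine ⟨⟨N, fun j k hj hk => mt (hfloor.injOn hj hk)⟩,
    ⟨N + 1, fun k hk => (Nat.zero_le _).trans_lt (hfloor (le_refl N) (mem_Ici.2 (by omega)) hk)⟩,
    by simpa using summable_abs_one_div_sub_div_floor_add hc hnonneg hgap 0,
    BMdensity_le_ofReal_one_div_liminf hmono.monotone hnonneg hliminf (hε.trans hεl)⟩

/-- If `liminf (λ_{n+1} − λ_n) = ℓ > 0` and `0 < ε < ℓ`, then the integers
`n_k = ⌊λ_k/(ℓ−ε)⌋` are eventually pairwise distinct positive integers,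
`∑ |1/λ_k − (1/(ℓ−ε))/n_k| < ∞`, and consequently `b(Λ) ≤ 1/ℓ`. -/
theorem BM_density_le_of_liminf_gaps (lam : ℕ → ℝ) (ℓ ε : ℝ)
    (hmono : StrictMono lam) (hpos : ∀ n, 0 < lam n)
    (hliminf : liminf (fun n : ℕ => lam (n + 1) - lam n) atTop = ℓ)
    (hl : 0 < ℓ) (hε : 0 < ε) (hεl : ε < ℓ)
    (nk : ℕ → ℕ) (hnk : ∀ k : ℕ, nk k = ⌊lam k / (ℓ - ε)⌋₊) :
    (∃ N : ℕ, ∀ j k : ℕ, N ≤ j → N ≤ k → j ≠ k → nk j ≠ nk k) ∧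
    (∃ N : ℕ, ∀ k : ℕ, N ≤ k → 0 < nk k) ∧
    Summable (fun k : ℕ => |1 / lam k - (1 / (ℓ - ε)) / (nk k : ℝ)|) ∧
    BMdensity lam ≤ ENNReal.ofReal (1 / ℓ) :=
  BM_density_le_of_liminf_gaps_general lam ℓ ε hmono hpos hliminf hε hεl nk hnk
end

section
/- Let Λ = (λ_n) and M = (μ_n) be strictly increasing sequences of positive reals with Beurling–Malliavin densities b(Λ), b(M) ∈ (0, +∞). If ℓ > 0 satisfies Σ_k |1/λ_k − 1/(ℓ μ_k)| < +∞, then ℓ is the unique such positive number, and b(M) = ℓ · b(Λ). -/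
open Filter ENNReal

/-!
Writing `1/μ_k = ℓ · (1/(ℓ μ_k))`, any admissible approximation `a/n_k` of `1/λ_k` becomes,
after multiplication by `ℓ`, an admissible approximation `ℓ a/n_k` of `1/μ_k`, because
`∑ |1/λ_k − 1/(ℓ μ_k)| < ∞`. Doing this in both directions gives `b(M) = ℓ b(Λ)`.
If two values `ℓ ≠ ℓ'` worked, then `∑ |1/ℓ − 1/ℓ'| / |μ_k| < ∞`, so `a = 0` would be
admissible for `M` with any `(n_k)`, contradicting `b(M) > 0`.
-/

section SummableAbsSub

variable {ι : Type*} {f g h : ι → ℝ}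

lemma Summable.abs_sub_comm (hfg : Summable fun i => |f i - g i|) :
    Summable fun i => |g i - f i| :=
  hfg.congr fun i => _root_.abs_sub_comm (f i) (g i)

lemma Summable.abs_sub_trans (hfg : Summable fun i => |f i - g i|)
    (hgh : Summable fun i => |g i - h i|) : Summable fun i => |f i - h i| :=
  .of_nonneg_of_le (fun _ => abs_nonneg _) (fun _ => abs_sub_le _ _ _) (hfg.add hgh)

lemma Summable.abs_mul_sub_mul (c : ℝ) (hfg : Summable fun i => |f i - g i|) :
    Summable fun i => |c * f i - c * g i| := by
  simpa only [← mul_sub, abs_mul] using hfg.mul_left |c|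

end SummableAbsSub

def BMAdmissible (lam : ℕ → ℝ) (a : ℝ≥0∞) : Prop :=
  a ≠ ⊤ ∧ ∃ nk : ℕ → ℕ, Function.Injective nk ∧ (∀ k, 0 < nk k) ∧
    Summable (fun k : ℕ => |1 / lam k - a.toReal / (nk k : ℝ)|)

lemma BMdensity_le {lam : ℕ → ℝ} {a : ℝ≥0∞} (ha : BMAdmissible lam a) : BMdensity lam ≤ a :=
  sInf_le ha

lemma BMdensity_eq_zero_of_summable (mu : ℕ → ℝ) (h : Summable fun k => |1 / mu k|) :
    BMdensity mu = 0 := by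
  refine nonpos_iff_eq_zero.mp (BMdensity_le ⟨zero_ne_top, (· + 1), add_left_injective 1,
    Nat.succ_pos, ?_⟩)
  simpa only [toReal_zero, zero_div, sub_zero] using h

section Comparison

variable {lam mu : ℕ → ℝ} {ℓ : ℝ}

lemma summable_abs_one_div_sub_symm (hl : ℓ ≠ 0)
    (hsum : Summable fun k => |1 / lam k - 1 / (ℓ * mu k)|) :
    Summable fun k => |1 / mu k - 1 / (ℓ⁻¹ * lam k)| := by
  refine (hsum.abs_mul_sub_mul ℓ).abs_sub_comm.congr fun k => ?_
  congr 2 <;> field_simp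

lemma BMAdmissible.ofReal_mul {a : ℝ≥0∞} (ha : BMAdmissible lam a) (hl : 0 < ℓ)
    (hsum : Summable fun k => |1 / lam k - 1 / (ℓ * mu k)|) :
    BMAdmissible mu (ENNReal.ofReal ℓ * a) := by
  obtain ⟨ha_top, nk, hinj, hpos, happrox⟩ := ha
  refine ⟨mul_ne_top ofReal_ne_top ha_top, nk, hinj, hpos, ?_⟩
  have hscaled := (hsum.abs_sub_comm.abs_sub_trans happrox).abs_mul_sub_mul ℓ
  refine hscaled.congr fun k => ?_
  rw [toReal_mul, toReal_ofReal hl.le]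
  congr 2 <;> field_simp

lemma ofReal_mul_ofReal_inv_mul {x : ℝ} (hx : 0 < x) (b : ℝ≥0∞) :
    ENNReal.ofReal x * (ENNReal.ofReal x⁻¹ * b) = b := by
  rw [← mul_assoc, ofReal_inv_of_pos hx, ENNReal.mul_inv_cancel (by simpa using hx) ofReal_ne_top,
    one_mul]

lemma ofReal_mul_BMdensity_le (hl : 0 < ℓ)
    (hsum : Summable fun k => |1 / lam k - 1 / (ℓ * mu k)|) :
    ENNReal.ofReal ℓ * BMdensity lam ≤ BMdensity mu := by
  refine le_sInf fun b hb => ?_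
  have hb' : BMAdmissible lam (ENNReal.ofReal ℓ⁻¹ * b) :=
    BMAdmissible.ofReal_mul hb (inv_pos.mpr hl) (summable_abs_one_div_sub_symm hl.ne' hsum)
  calc ENNReal.ofReal ℓ * BMdensity lam ≤ ENNReal.ofReal ℓ * (ENNReal.ofReal ℓ⁻¹ * b) := by
        gcongr; exact BMdensity_le hb'
    _ = b := ofReal_mul_ofReal_inv_mul hl b

lemma BMdensity_eq_ofReal_mul (hl : 0 < ℓ)
    (hsum : Summable fun k => |1 / lam k - 1 / (ℓ * mu k)|) :
    BMdensity mu = ENNReal.ofReal ℓ * BMdensity lam := by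
  refine le_antisymm ?_ (ofReal_mul_BMdensity_le hl hsum)
  calc BMdensity mu = ENNReal.ofReal ℓ * (ENNReal.ofReal ℓ⁻¹ * BMdensity mu) :=
        (ofReal_mul_ofReal_inv_mul hl _).symm
    _ ≤ ENNReal.ofReal ℓ * BMdensity lam := by
        gcongr
        exact ofReal_mul_BMdensity_le (inv_pos.mpr hl) (summable_abs_one_div_sub_symm hl.ne' hsum)

lemma summable_abs_one_div_of_ne {ℓ' : ℝ} (hne : ℓ ≠ ℓ')
    (hsum : Summable fun k => |1 / lam k - 1 / (ℓ * mu k)|)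
    (hsum' : Summable fun k => |1 / lam k - 1 / (ℓ' * mu k)|) :
    Summable fun k => |1 / mu k| := by
  have hc : |ℓ⁻¹ - ℓ'⁻¹| ≠ 0 := abs_ne_zero.mpr (sub_ne_zero.mpr (inv_injective.ne hne))
  refine (summable_mul_left_iff hc).mp ((hsum.abs_sub_comm.abs_sub_trans hsum').congr fun k => ?_)
  rw [← abs_mul, mul_one_div]
  ring_nf

lemma eq_of_summable_of_BMdensity_pos {ℓ' : ℝ} (hbM : 0 < BMdensity mu)
    (hsum : Summable fun k => |1 / lam k - 1 / (ℓ * mu k)|)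
    (hsum' : Summable fun k => |1 / lam k - 1 / (ℓ' * mu k)|) :
    ℓ' = ℓ := by
  by_contra hne
  exact hbM.ne' (BMdensity_eq_zero_of_summable mu
    (summable_abs_one_div_of_ne (Ne.symm hne) hsum hsum'))

end Comparison

theorem BM_density_comparison_general (lam mu : ℕ → ℝ) (ℓ : ℝ)
    (hbM : 0 < BMdensity mu)
    (hl : 0 < ℓ)
    (hsum : Summable (fun k : ℕ => |1 / lam k - 1 / (ℓ * mu k)|)) :
    (∀ ℓ' : ℝ, 0 < ℓ' →
        Summable (fun k : ℕ => |1 / lam k - 1 / (ℓ' * mu k)|) → ℓ' = ℓ) ∧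
    BMdensity mu = ENNReal.ofReal ℓ * BMdensity lam :=
  ⟨fun _ _ hsum' => eq_of_summable_of_BMdensity_pos hbM hsum hsum',
    BMdensity_eq_ofReal_mul hl hsum⟩

/-- If `b(Λ), b(M) ∈ (0,∞)` and `ℓ > 0` satisfies `∑ |1/λ_k − 1/(ℓ μ_k)| < ∞`,
then such an `ℓ` is unique and `b(M) = ℓ · b(Λ)`. -/
theorem BM_density_comparison (lam mu : ℕ → ℝ) (ℓ : ℝ)
    (hmonoL : StrictMono lam) (hposL : ∀ n, 0 < lam n)
    (hmonoM : StrictMono mu) (hposM : ∀ n, 0 < mu n)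
    (hbL : 0 < BMdensity lam) (hbL' : BMdensity lam < ⊤)
    (hbM : 0 < BMdensity mu) (hbM' : BMdensity mu < ⊤)
    (hl : 0 < ℓ)
    (hsum : Summable (fun k : ℕ => |1 / lam k - 1 / (ℓ * mu k)|)) :
    (∀ ℓ' : ℝ, 0 < ℓ' →
        Summable (fun k : ℕ => |1 / lam k - 1 / (ℓ' * mu k)|) → ℓ' = ℓ) ∧
    BMdensity mu = ENNReal.ofReal ℓ * BMdensity lam :=
  BM_density_comparison_general lam mu ℓ hbM hl hsum
end

section
/- Let Λ = (λ_n)_{n≥1} be a strictly increasing sequence of positive reals with Beurling–Malliavin density b(Λ) < +∞. If there exists ℓ > 0 with Σ_k |1/λ_k − ℓ/k| < +∞, then ℓ = b(Λ). -/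
/-!
Taking `n_k = k + 1` shows `b(Λ) ≤ ℓ`. Conversely, if `a` is admissible with witness `(n_k)`,
the triangle inequality makes `∑ |ℓ/(k+1) − a/n_k|` finite. An injective sequence of positive
integers satisfies `∑_{k<N} 1/n_k ≤ H_N`, so the partial sums of that series are at least
`(ℓ − a) H_N`, and `H_N → ∞` forces `ℓ ≤ a`.
-/

open Filter ENNReal

open Finset

theorem Antitone.sum_le_sum_range_card {M : Type*} [AddCommMonoid M] [PartialOrder M]
    [IsOrderedAddMonoid M] {f : ℕ → M} (hf : Antitone f) (s : Finset ℕ) :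
    ∑ m ∈ s, f m ≤ ∑ k ∈ range #s, f k := by
  induction s using Finset.induction_on_max with
  | empty => simp
  | insert a s hlt ih =>
    have ha : a ∉ s := fun h => (hlt a h).false
    have hcard : #s ≤ a := by
      simpa using card_le_card (fun x hx => mem_range.mpr (hlt x hx) : s ⊆ range a)
    rw [sum_insert ha, card_insert_of_notMem ha, sum_range_succ, add_comm]
    exact add_le_add ih (hf hcard)

theorem Antitone.sum_range_comp_le {M : Type*} [AddCommMonoid M] [PartialOrder M]
    [IsOrderedAddMonoid M] {f : ℕ → M} (hf : Antitone f) {g : ℕ → ℕ}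
    (hg : Function.Injective g) (N : ℕ) :
    ∑ k ∈ range N, f (g k) ≤ ∑ k ∈ range N, f k := by
  simpa [sum_image hg.injOn, card_image_of_injective _ hg] using
    hf.sum_le_sum_range_card ((range N).image g)

theorem sum_range_one_div_le_harmonic {n : ℕ → ℕ} (hn : Function.Injective n)
    (hpos : ∀ k, 0 < n k) (N : ℕ) :
    ∑ k ∈ range N, (1 : ℝ) / n k ≤ ∑ k ∈ range N, 1 / ((k : ℝ) + 1) := by
  have hanti : Antitone fun k : ℕ => 1 / ((k : ℝ) + 1) := fun i j hij => by
    dsimp only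
    gcongr
  have hshift : Function.Injective fun k => n k - 1 := fun i j hij =>
    hn (by have := hpos i; have := hpos j; simp only at hij; omega)
  refine le_of_eq_of_le (sum_congr rfl fun k _ => ?_) (hanti.sum_range_comp_le hshift N)
  rw [Nat.cast_sub (hpos k), Nat.cast_one, sub_add_cancel]

theorem le_of_summable_abs_div_succ_sub_div {ℓ t : ℝ} (ht : 0 ≤ t) {n : ℕ → ℕ}
    (hn : Function.Injective n) (hpos : ∀ k, 0 < n k)
    (hS : Summable fun k : ℕ => |ℓ / ((k : ℝ) + 1) - t / n k|) : ℓ ≤ t := by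
  by_contra! hlt
  have hbound (N : ℕ) : (ℓ - t) * ∑ k ∈ range N, 1 / ((k : ℝ) + 1) ≤
      ∑' k : ℕ, |ℓ / ((k : ℝ) + 1) - t / n k| :=
    calc (ℓ - t) * ∑ k ∈ range N, 1 / ((k : ℝ) + 1)
        ≤ ℓ * ∑ k ∈ range N, 1 / ((k : ℝ) + 1) - t * ∑ k ∈ range N, (1 : ℝ) / n k := by
          nlinarith [mul_le_mul_of_nonneg_left (sum_range_one_div_le_harmonic hn hpos N) ht]
      _ = ∑ k ∈ range N, (ℓ / ((k : ℝ) + 1) - t / n k) := by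
          simp only [mul_sum, sum_sub_distrib, mul_one_div]
      _ ≤ ∑ k ∈ range N, |ℓ / ((k : ℝ) + 1) - t / n k| := sum_le_sum fun k _ => le_abs_self _
      _ ≤ _ := hS.sum_le_tsum _ fun k _ => abs_nonneg _
  obtain ⟨N, hN⟩ := ((Real.tendsto_sum_range_one_div_nat_succ_atTop.const_mul_atTop
    (sub_pos.mpr hlt)).eventually_gt_atTop (∑' k : ℕ, |ℓ / ((k : ℝ) + 1) - t / n k|)).exists
  exact (hbound N).not_gt hN

theorem BM_density_eq_of_summable_general (lam : ℕ → ℝ) (ℓ : ℝ)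
    (hl : 0 < ℓ)
    (hsum : Summable (fun k : ℕ => |1 / lam k - ℓ / ((k : ℝ) + 1)|)) :
    ENNReal.ofReal ℓ = BMdensity lam := by
  have hupper : BMdensity lam ≤ ENNReal.ofReal ℓ :=
    sInf_le ⟨ofReal_ne_top, (· + 1), add_left_injective 1, Nat.succ_pos,
      by simpa [toReal_ofReal hl.le] using hsum⟩
  have hlower : ENNReal.ofReal ℓ ≤ BMdensity lam := by
    refine le_sInf fun a ⟨ha, n, hn, hpos, hsum'⟩ => (ofReal_le_iff_le_toReal ha).mpr ?_
    refine le_of_summable_abs_div_succ_sub_div toReal_nonneg hn hpos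
      ((hsum.add hsum').of_nonneg_of_le (fun _ => abs_nonneg _) fun k => ?_)
    rw [abs_sub_comm (1 / lam k)]
    exact abs_sub_le _ _ _
  exact le_antisymm hlower hupper

/-- If `b(Λ) < ∞` and there is `ℓ > 0` with `∑ |1/λ_k − ℓ/k| < ∞`, then
`ℓ = b(Λ)`. (`lam k` denotes `λ_{k+1}`.) -/
theorem BM_density_eq_of_summable (lam : ℕ → ℝ) (ℓ : ℝ)
    (hmono : StrictMono lam) (hpos : ∀ n, 0 < lam n)
    (hb : BMdensity lam < ⊤) (hl : 0 < ℓ)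
    (hsum : Summable (fun k : ℕ => |1 / lam k - ℓ / ((k : ℝ) + 1)|)) :
    ENNReal.ofReal ℓ = BMdensity lam :=
  BM_density_eq_of_summable_general lam ℓ hl hsum
end
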